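/- arXiv:1611.10208 — 7 statements merged into one kernel-verified Lean document; each statement's English description precedes it below -/
import Mathlib

section
/- There exists a unique α₀ ∈ (0, 2π/3) such that the function f(α) = 3α/2 − π − sin(α/2) + 2·sin(α) satisfies f(α) < 0 for all α ∈ [0, α₀), f(α₀) = 0, and f(α) > 0 for all α ∈ (α₀, π). -/
/-!
By the intermediate value theorem `F` vanishes somewhere in `(0, 2π/3)`, since `F 0 = -π` and
`F (2π/3) = √3/2`. As `F'' α = sin (α/2) (1/4 - 4 cos (α/2))` and `cos (α/2) > 1/16` for
`α ≤ 14/5`, `F` is strictly concave on `[0, 14/5]`, so it can change sign only once there;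
on `[14/5, π]` it is positive because `3α/2 - π - 1 > 0` and `sin α ≥ 0`.
-/

open Real Set

theorem StrictConcaveOn.pos_of_nonneg_of_pos {𝕜 β : Type*} [Field 𝕜] [LinearOrder 𝕜]
    [IsStrictOrderedRing 𝕜] [AddCommMonoid β] [LinearOrder β] [IsOrderedAddMonoid β]
    [Module 𝕜 β] [PosSMulStrictMono 𝕜 β] {s : Set 𝕜} {f : 𝕜 → β} (hf : StrictConcaveOn 𝕜 s f)
    {x y z : 𝕜} (hx : x ∈ s) (hz : z ∈ s) (hxy : x < y) (hyz : y < z) (hfx : 0 ≤ f x)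
    (hfz : 0 < f z) : 0 < f y := by
  have hy : y ∈ openSegment 𝕜 x z := by
    rw [openSegment_eq_Ioo (hxy.trans hyz)]
    exact ⟨hxy, hyz⟩
  exact (le_min hfx hfz.le).trans_lt (hf.lt_on_openSegment hx hz (hxy.trans hyz).ne hy)

noncomputable def F (α : ℝ) : ℝ := 3 * α / 2 - π - sin (α / 2) + 2 * sin α

theorem hasDerivAt_F (x : ℝ) : HasDerivAt F (3 / 2 - cos (x / 2) / 2 + 2 * cos x) x := by
  have h := (((((hasDerivAt_id x).const_mul 3).div_const 2).sub_const π).sub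
    ((hasDerivAt_id x).div_const 2).sin).add ((hasDerivAt_sin x).const_mul 2)
  exact h.congr_deriv (by simp only [id, mul_one]; ring)

theorem deriv2_F (x : ℝ) : deriv^[2] F x = sin (x / 2) * (1 / 4 - 4 * cos (x / 2)) := by
  have hF' : deriv F = fun x ↦ 3 / 2 - cos (x / 2) / 2 + 2 * cos x :=
    funext fun x ↦ (hasDerivAt_F x).deriv
  have h : HasDerivAt (fun x ↦ 3 / 2 - cos (x / 2) / 2 + 2 * cos x)
      (sin (x / 2) / 4 - 2 * sin x) x :=
    ((((hasDerivAt_id x).div_const 2).cos.div_const 2).const_sub (3 / 2)).add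
      ((hasDerivAt_cos x).const_mul 2) |>.congr_deriv (by simp only [id]; ring)
  have hsin : sin x = 2 * sin (x / 2) * cos (x / 2) := by rw [← sin_two_mul]; ring_nf
  rw [Function.iterate_succ_apply, Function.iterate_one, hF', h.deriv, hsin]
  ring

theorem strictConcaveOn_F : StrictConcaveOn ℝ (Icc 0 (14 / 5)) F := by
  refine strictConcaveOn_of_deriv2_neg (convex_Icc _ _) (by unfold F; fun_prop) fun x hx ↦ ?_
  rw [interior_Icc] at hx
  rw [deriv2_F]
  have hsin : 0 < sin (x / 2) :=
    sin_pos_of_pos_of_lt_pi (by linarith [hx.1]) (by linarith [hx.2, pi_gt_three])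
  have hcos : 1 - 2 / π * (x / 2) ≤ cos (x / 2) :=
    one_sub_mul_le_cos (by linarith [hx.1]) (by linarith [hx.2, pi_gt_d2])
  have : 2 / π * (x / 2) < 14 / 15 := by
    rw [div_mul_eq_mul_div, div_lt_iff₀ pi_pos]; linarith [hx.2, pi_gt_d2]
  nlinarith

theorem F_zero_neg : F 0 < 0 := by
  simp [F, pi_pos]

theorem F_two_pi_div_three_pos : 0 < F (2 * π / 3) := by
  have h : sin (2 * π / 3) = sin (π / 3) := by rw [← sin_pi_sub]; ring_nf
  simp only [F, h, show 2 * π / 3 / 2 = π / 3 by ring, sin_pi_div_three]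
  have := sqrt_pos.2 (show (0 : ℝ) < 3 by norm_num)
  linarith

theorem F_pos_of_le_of_le {x : ℝ} (h : 14 / 5 ≤ x) (hx : x ≤ π) : 0 < F x := by
  have := sin_le_one (x / 2)
  have := sin_nonneg_of_nonneg_of_le_pi (by linarith) hx
  unfold F
  linarith [pi_lt_d2]

theorem F_neg_of_lt_root {a x : ℝ} (ha : a < 2 * π / 3) (hFa : F a = 0) (hx : x ∈ Ico 0 a) :
    F x < 0 := by
  by_contra! hFx
  have hb : 2 * π / 3 ≤ 14 / 5 := by linarith [pi_lt_d2]
  have := strictConcaveOn_F.pos_of_nonneg_of_pos ⟨hx.1, by linarith [hx.2]⟩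
    ⟨by positivity, hb⟩ hx.2 ha hFx F_two_pi_div_three_pos
  exact this.ne' hFa

theorem F_pos_of_root_lt {a x : ℝ} (ha : 0 ≤ a) (hFa : F a = 0) (hx : x ∈ Ioo a π) :
    0 < F x := by
  rcases lt_or_ge x (14 / 5) with hx' | hx'
  · exact strictConcaveOn_F.pos_of_nonneg_of_pos ⟨ha, by linarith [hx.1]⟩ ⟨by norm_num, le_rfl⟩
      hx.1 hx' hFa.ge (F_pos_of_le_of_le le_rfl (by linarith [pi_gt_d2]))
  · exact F_pos_of_le_of_le hx' hx.2.le

theorem stmt0 :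
    ∃! α₀ : ℝ, α₀ ∈ Set.Ioo 0 (2 * π / 3) ∧
      (∀ α ∈ Set.Ico (0:ℝ) α₀, 3 * α / 2 - π - sin (α / 2) + 2 * sin α < 0) ∧
      (3 * α₀ / 2 - π - sin (α₀ / 2) + 2 * sin α₀ = 0) ∧
      (∀ α ∈ Set.Ioo α₀ π, 3 * α / 2 - π - sin (α / 2) + 2 * sin α > 0) := by
  obtain ⟨a, ha, hFa⟩ : ∃ a ∈ Ioo 0 (2 * π / 3), F a = 0 :=
    intermediate_value_Ioo (by positivity) (by unfold F; fun_prop)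
      ⟨F_zero_neg, F_two_pi_div_three_pos⟩
  refine ⟨a, ⟨ha, fun x hx ↦ F_neg_of_lt_root ha.2 hFa hx, hFa,
    fun x hx ↦ F_pos_of_root_lt ha.1.le hFa hx⟩, ?_⟩
  rintro b ⟨-, hneg, -, hpos⟩
  rcases lt_trichotomy b a with h | rfl | h
  · exact absurd hFa (hpos a ⟨h, by linarith [ha.2, pi_pos]⟩).ne'
  · rfl
  · exact absurd hFa (hneg a ⟨ha.1.le, h⟩).ne
end

section
/- For all real α with 0 ≤ α ≤ 2π/3, letting x̄ = 3α/2 − π − sin(α/2) + 2·sin(α), one has max(α, x̄ + 2·sin(α/2)) + 2 ≤ π − α/2 + 3·sin(α/2). -/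
/-!
Write `t = α / 2`. Against the first entry of the max the claim is `3t + 2 ≤ π + 3 sin t` on
`[0, π/3]`, which is Jordan's inequality `sin t ≥ 2t/π`; it is tight exactly at `t = π/3`.
Against the second entry it reduces to `α + 1 + sin α - sin (α/2) ≤ π`. Sum-to-product gives
`sin α - sin (α/2) = 2 sin (α/4) cos (3α/4)`, where `sin (α/4) ≤ sin (π/6) = 1/2` and
`cos (3α/4) = sin (π/2 - 3α/4) ≤ π/2 - 3α/4`; what is left is `1 + 2π/3 ≤ π`.
-/

open Real

lemma cos_le_pi_div_two_sub {x : ℝ} (hx : x ≤ π / 2) : cos x ≤ π / 2 - x := by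
  rw [← sin_pi_div_two_sub]
  exact sin_le (by linarith)

lemma three_mul_add_two_le_pi_add_three_mul_sin {x : ℝ} (hx₀ : 0 ≤ x) (hx : x ≤ π / 3) :
    3 * x + 2 ≤ π + 3 * sin x := by
  have hjordan := mul_le_sin hx₀ (by linarith [pi_pos])
  have hscaled : 2 * x ≤ π * sin x := by
    have := mul_le_mul_of_nonneg_left hjordan pi_pos.le
    rwa [← mul_assoc, mul_div_cancel₀ _ pi_ne_zero] at this
  nlinarith [mul_nonneg (by linarith [pi_gt_three] : (0 : ℝ) ≤ π - 2) (by linarith : 0 ≤ π - 3 * x),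
    pi_gt_three]

lemma sin_sub_sin_half_le {α : ℝ} (h₀ : 0 ≤ α) (h₁ : α ≤ 2 * π / 3) :
    sin α - sin (α / 2) ≤ π / 2 - 3 * α / 4 := by
  rw [sin_sub_sin, show (α - α / 2) / 2 = α / 4 by ring, show (α + α / 2) / 2 = 3 * α / 4 by ring]
  have hs₀ : 0 ≤ sin (α / 4) := sin_nonneg_of_nonneg_of_le_pi (by linarith) (by linarith [pi_pos])
  have hs₁ : sin (α / 4) ≤ 1 / 2 := by
    rw [← sin_pi_div_six]
    exact sin_le_sin_of_le_of_le_pi_div_two (by linarith [pi_pos]) (by linarith [pi_pos])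
      (by linarith)
  have hc₀ : 0 ≤ cos (3 * α / 4) := cos_nonneg_of_mem_Icc ⟨by linarith [pi_pos], by linarith⟩
  have hc₁ := cos_le_pi_div_two_sub (x := 3 * α / 4) (by linarith)
  nlinarith [mul_le_mul_of_nonneg_right hs₁ hc₀]

theorem stmt5 (α : ℝ) (h0 : 0 ≤ α) (h1 : α ≤ 2 * π / 3) :
    max α ((3 * α / 2 - π - sin (α / 2) + 2 * sin α) + 2 * sin (α / 2)) + 2 ≤
      π - α / 2 + 3 * sin (α / 2) := by
  have hfirst := three_mul_add_two_le_pi_add_three_mul_sin (x := α / 2) (by linarith) (by linarith)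
  have hsecond := sin_sub_sin_half_le h0 h1
  rw [← max_add_add_right]
  exact max_le (by linarith) (by linarith [pi_gt_three])
end

section
/- For all real α with 0 ≤ α ≤ π, α − sin(α/2) + 2·sin(α) ≤ π. -/
open Real

/- With β = π - α the claim becomes 2 sin β ≤ β + cos (β / 2) on [0, π]. Bounding sin β above by
its Taylor polynomial of degree 5 and cos (β / 2) below by 1 - β² / 8 reduces this to a quintic
polynomial inequality on [0, 3.15], whose slack is smallest (about 0.15) near β = 6 / 5. -/

lemma le_of_hasDerivAt_le_of_nonneg {f g f' g' : ℝ → ℝ} (hf : ∀ t, HasDerivAt f (f' t) t)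
    (hg : ∀ t, HasDerivAt g (g' t) t) (h0 : f 0 ≤ g 0) (hd : ∀ t, 0 ≤ t → f' t ≤ g' t)
    {x : ℝ} (hx : 0 ≤ x) : f x ≤ g x :=
  image_le_of_deriv_right_le_deriv_boundary (a := 0) (b := x)
    (fun t _ => (hf t).continuousAt.continuousWithinAt) (fun t _ => (hf t).hasDerivWithinAt)
    h0 (fun t _ => (hg t).continuousAt.continuousWithinAt) (fun t _ => (hg t).hasDerivWithinAt)
    (fun t ht => hd t ht.1) ⟨hx, le_rfl⟩

lemma cos_le_one_sub_sq_div_two_add_pow_four_div {x : ℝ} (hx : 0 ≤ x) :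
    cos x ≤ 1 - x ^ 2 / 2 + x ^ 4 / 24 := by
  refine le_of_hasDerivAt_le_of_nonneg (g := fun t => 1 - t ^ 2 / 2 + t ^ 4 / 24)
    (f' := fun t => -sin t) (g' := fun t => -(t - t ^ 3 / 6))
    hasDerivAt_cos (fun t => ?_) (by simp) (fun t ht => neg_le_neg (sin_ge_sub_cube ht)) hx
  exact ((((hasDerivAt_pow 2 t).div_const 2).const_sub 1).add
    ((hasDerivAt_pow 4 t).div_const 24)).congr_deriv (by push_cast; ring)

lemma sin_le_sub_pow_three_div_add_pow_five_div {x : ℝ} (hx : 0 ≤ x) :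
    sin x ≤ x - x ^ 3 / 6 + x ^ 5 / 120 := by
  refine le_of_hasDerivAt_le_of_nonneg (g := fun t => t - t ^ 3 / 6 + t ^ 5 / 120)
    (g' := fun t => 1 - t ^ 2 / 2 + t ^ 4 / 24)
    hasDerivAt_sin (fun t => ?_) (by simp)
    (fun t ht => cos_le_one_sub_sq_div_two_add_pow_four_div ht) hx
  exact (((hasDerivAt_id' t).sub ((hasDerivAt_pow 3 t).div_const 6)).add
    ((hasDerivAt_pow 5 t).div_const 120)).congr_deriv (by push_cast; ring)

lemma two_mul_sin_le_add_cos_half {x : ℝ} (h0 : 0 ≤ x) (h1 : x ≤ π) :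
    2 * sin x ≤ x + cos (x / 2) := by
  have hsin := sin_le_sub_pow_three_div_add_pow_five_div h0
  have hcos := one_sub_sq_div_two_le_cos (x := x / 2)
  have hx : x ≤ 3.15 := h1.trans pi_lt_d2.le
  have hpoly : 0 ≤ 1 - x - x ^ 2 / 8 + x ^ 3 / 3 - x ^ 5 / 60 := by
    nlinarith [mul_nonneg (mul_nonneg h0 (sq_nonneg (x - 6 / 5))) (sub_nonneg.2 hx)]
  linarith

theorem stmt7 (α : ℝ) (h0 : 0 ≤ α) (h1 : α ≤ π) :
    α - sin (α / 2) + 2 * sin α ≤ π := by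
  have key := two_mul_sin_le_add_cos_half (x := π - α) (by linarith) (by linarith)
  rw [sin_pi_sub, show (π - α) / 2 = π / 2 - α / 2 by ring, cos_pi_div_two_sub] at key
  linarith
end

section
/- For all real α with 0 ≤ α ≤ 2π/3, α/2 + 2·sin(α) ≤ π − α + 2·sin(α/2). -/
open Real Set

/-- The derivative is `1 + 2 cos x - 8 cos² x = (1 + 4 cos x)(1 - 2 cos x)`, which is `≤ 0`
while `cos x ≥ 1/2`. -/
lemma antitoneOn_pi_sub_three_mul_sub_two_sin_two_mul_add_two_sin :
    AntitoneOn (fun x : ℝ => π - 3 * x - 2 * sin (2 * x) + 2 * sin x) (Icc 0 (π / 3)) := by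
  have hderiv : ∀ x : ℝ, HasDerivAt (fun x : ℝ => π - 3 * x - 2 * sin (2 * x) + 2 * sin x)
      (1 + 2 * cos x - 8 * cos x ^ 2) x := by
    intro x
    have := ((((hasDerivAt_id x).const_mul 3).const_sub π).sub
      (((hasDerivAt_id x).const_mul 2).sin.const_mul 2)).add ((hasDerivAt_sin x).const_mul 2)
    simp only [id, mul_one] at this
    exact this.congr_deriv (by rw [cos_two_mul]; ring)
  refine antitoneOn_of_hasDerivWithinAt_nonpos (convex_Icc _ _) (by fun_prop)
    (fun x _ => (hderiv x).hasDerivWithinAt) fun x hx => ?_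
  rw [interior_Icc] at hx
  have hcos : 1 / 2 ≤ cos x := by
    rw [← cos_pi_div_three]
    exact cos_le_cos_of_nonneg_of_le_pi hx.1.le (by linarith [pi_pos]) hx.2.le
  nlinarith

lemma two_mul_sin_two_mul_sub_two_mul_sin_le {t : ℝ} (ht0 : 0 ≤ t) (ht1 : t ≤ π / 3) :
    2 * sin (2 * t) - 2 * sin t ≤ π - 3 * t := by
  have hmono := antitoneOn_pi_sub_three_mul_sub_two_sin_two_mul_add_two_sin
    ⟨ht0, ht1⟩ ⟨by positivity, le_rfl⟩ ht1
  have hend : sin (2 * (π / 3)) = sin (π / 3) := by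
    rw [show 2 * (π / 3) = π - π / 3 by ring, sin_pi_sub]
  simp only [hend] at hmono
  linarith

theorem stmt8 (α : ℝ) (h0 : 0 ≤ α) (h1 : α ≤ 2 * π / 3) :
    α / 2 + 2 * sin α ≤ π - α + 2 * sin (α / 2) := by
  have h := two_mul_sin_two_mul_sub_two_mul_sin_le (t := α / 2) (by linarith) (by linarith)
  rw [mul_div_cancel₀ α two_ne_zero] at h
  linarith
end

section
/- For all real α with 0 ≤ α ≤ 2π/3 and all real x with 0 ≤ x ≤ α/2, x + 2·sin(α/2 − x) + 2·sin(α) ≤ π − α + 4·sin(α/2). -/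
open Real

lemma mul_cos_le_sin' {t : ℝ} (h0 : 0 ≤ t) (h1 : t < π / 2) : t * cos t ≤ sin t := by
  rcases h0.eq_or_lt with rfl | ht
  · simp
  · have hc : 0 < cos t := Real.cos_pos_of_mem_Ioo ⟨by linarith [pi_pos], h1⟩
    have h := Real.lt_tan ht h1
    rw [Real.tan_eq_sin_div_cos, lt_div_iff₀ hc] at h
    linarith

theorem stmt10 (α x : ℝ) (hα0 : 0 ≤ α) (hα1 : α ≤ 2 * π / 3)
    (hx0 : 0 ≤ x) (hx1 : x ≤ α / 2) :
    x + 2 * sin (α / 2 - x) + 2 * sin α ≤ π - α + 4 * sin (α / 2) := by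
  have hπ3 := Real.pi_gt_d6
  have hπ4 := Real.pi_lt_d2
  have ha : α / 2 ≤ π / 3 := by linarith
  -- Step A : x + 2 sin(α/2 - x) ≤ 2 sin(α/2)
  have hA : x + 2 * sin (α / 2 - x) ≤ 2 * sin (α / 2) := by
    have key : sin (α / 2) - sin (α / 2 - x) =
        2 * sin (x / 2) * cos (α / 2 - x / 2) := by
      rw [Real.sin_sub_sin]; ring_nf
    have h1 : x / 2 * cos (x / 2) ≤ sin (x / 2) :=
      mul_cos_le_sin' (by linarith) (by linarith)
    have hcs : cos (x / 2) * cos (α / 2 - x / 2) ≥ cos (α / 2) := by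
      have e1 := Real.cos_sub (x / 2) (α / 2 - x / 2)
      have e2 := Real.cos_add (x / 2) (α / 2 - x / 2)
      have h2 : x / 2 - (α / 2 - x / 2) = -(α / 2 - x) := by ring
      have h4 : x / 2 + (α / 2 - x / 2) = α / 2 := by ring
      rw [h2, Real.cos_neg] at e1
      rw [h4] at e2
      have h3 : cos (α / 2 - x) ≥ cos (α / 2) :=
        Real.cos_le_cos_of_nonneg_of_le_pi (by linarith) (by linarith) (by linarith)
      linarith
    have hca : cos (α / 2) ≥ 1 / 2 := by
      rw [show (1:ℝ)/2 = cos (π/3) by rw [Real.cos_pi_div_three]]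
      exact Real.cos_le_cos_of_nonneg_of_le_pi (by linarith) (by linarith) ha
    have hcax : 0 ≤ cos (α / 2 - x / 2) := Real.cos_nonneg_of_mem_Icc
      ⟨by linarith, by linarith⟩
    have h5 : 2 * sin (x / 2) * cos (α / 2 - x / 2) ≥
        x * (cos (x / 2) * cos (α / 2 - x / 2)) := by
      nlinarith
    nlinarith
  -- Step B : 2 sin α ≤ π - α + 2 sin(α/2)
  have hB : 2 * sin α ≤ π - α + 2 * sin (α / 2) := by
    have key : sin α - sin (α / 2) = 2 * sin (α / 4) * cos (3 * α / 4) := by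
      rw [Real.sin_sub_sin]; ring_nf
    have hc : cos (3 * α / 4) = sin (π / 2 - 3 * α / 4) := by
      rw [Real.sin_pi_div_two_sub]
    have h1 : sin (π / 2 - 3 * α / 4) ≤ π / 2 - 3 * α / 4 :=
      Real.sin_le (by linarith)
    have h2 : sin (α / 4) ≤ α / 4 := Real.sin_le (by linarith)
    have h3 : 0 ≤ sin (α / 4) := Real.sin_nonneg_of_nonneg_of_le_pi (by linarith) (by linarith)
    have h4 : 0 ≤ cos (3 * α / 4) := Real.cos_nonneg_of_mem_Icc ⟨by linarith, by linarith⟩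
    have h5 : sin α - sin (α / 2) ≤ (α / 2) * (π / 2 - 3 * α / 4) := by
      rw [key, hc]
      nlinarith
    nlinarith [sq_nonneg (3 * α - π - 2)]
  linarith
end

section
/- For all real α with 2π/3 ≤ α ≤ π and all real x with 0 ≤ x ≤ π − α, x + 2·sin(π/2 − α/2 − x) ≤ π − α + 2·sin(α/2). -/
open Real

theorem stmt11 (α x : ℝ) (hα0 : 2 * π / 3 ≤ α) (hα1 : α ≤ π)
    (hx0 : 0 ≤ x) (hx1 : x ≤ π - α) :
    x + 2 * sin (π / 2 - α / 2 - x) ≤ π - α + 2 * sin (α / 2) := by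
  have hπ := Real.pi_pos
  -- Step 1: x + 2 sin(π/2 - α/2 - x) ≤ 2 sin(π/2 - α/2)
  have hdiff : Real.sin (π / 2 - α / 2) - Real.sin (π / 2 - α / 2 - x)
      = 2 * Real.sin (x / 2) * Real.sin (α / 2 + x / 2) := by
    rw [Real.sin_sub_sin]
    have h1 : (π / 2 - α / 2 - (π / 2 - α / 2 - x)) / 2 = x / 2 := by ring
    have h2 : (π / 2 - α / 2 + (π / 2 - α / 2 - x)) / 2 = π / 2 - (α / 2 + x / 2) := by ring
    rw [h1, h2, Real.cos_pi_div_two_sub]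
  have hs1 : x / π ≤ Real.sin (x / 2) := by
    simpa using Real.mul_le_sin (x := x / 2) (by positivity) (by linarith)
  have hs2 : Real.sqrt 3 / 2 ≤ Real.sin (α / 2 + x / 2) := by
    rw [← Real.sin_pi_div_three]
    apply Real.sin_le_sin_of_le_of_le_pi_div_two (by linarith) (by linarith) (by linarith)
  have hsqrt3 : (1.7 : ℝ) ≤ Real.sqrt 3 := by
    rw [show (1.7 : ℝ) = Real.sqrt (1.7 ^ 2) by rw [Real.sqrt_sq]; norm_num]
    apply Real.sqrt_le_sqrt; norm_num
  have hpi4 : π ≤ 3.2 := by linarith [Real.pi_lt_d2]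
  have hprod : x ≤ 2 * (2 * Real.sin (x / 2) * Real.sin (α / 2 + x / 2)) := by
    have h1 : Real.sqrt 3 / 2 * (x / π) ≤ Real.sin (α / 2 + x / 2) * Real.sin (x / 2) := by
      apply mul_le_mul hs2 hs1 (by positivity) (le_trans (by positivity) hs2)
    have h2 : x ≤ 4 * (Real.sqrt 3 / 2 * (x / π)) := by
      rw [show 4 * (Real.sqrt 3 / 2 * (x / π)) = 2 * Real.sqrt 3 * x / π by ring,
        le_div_iff₀ hπ]
      nlinarith
    nlinarith
  have key1 : x + 2 * Real.sin (π / 2 - α / 2 - x) ≤ 2 * Real.sin (π / 2 - α / 2) := by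
    nlinarith [hdiff]
  -- Step 2: 2 sin(π/2 - α/2) = 2 cos(α/2) ≤ 2 sin(α/2)
  have key2 : Real.sin (π / 2 - α / 2) ≤ Real.sin (α / 2) := by
    apply Real.sin_le_sin_of_le_of_le_pi_div_two (by linarith) (by linarith) (by linarith)
  linarith
end

section
/- For all real α with 0 ≤ α ≤ π, α/2 + 2·sin(α/2) + 2·sin(α) ≤ π − α/2 + 3·sin(α/2); equivalently, α + 2·sin(α) ≤ π + sin(α/2). -/
open Real

lemma aux18 (s c : ℝ) (hs : 0 ≤ s) (hc : 0 ≤ c) (h : s ^ 2 + c ^ 2 = 1) :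
    4 * s * c ≤ s + 2 * c := by
  nlinarith [sq_nonneg (s - c), sq_nonneg (2 * c - 1), sq_nonneg (s + c - 1),
    sq_nonneg (2 * s * c - c), sq_nonneg (s - 1), sq_nonneg (c - 1), mul_nonneg hs hc]

theorem stmt18 (α : ℝ) (h0 : 0 ≤ α) (h1 : α ≤ π) :
    α / 2 + 2 * sin (α / 2) + 2 * sin α ≤ π - α / 2 + 3 * sin (α / 2) := by
  set s := sin (α / 2) with hsdef
  set c := cos (α / 2) with hcdef
  have hsα : sin α = 2 * s * c := by
    rw [hsdef, hcdef, ← Real.sin_two_mul]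
    ring_nf
  have hs0 : 0 ≤ s := Real.sin_nonneg_of_nonneg_of_le_pi (by linarith) (by linarith [Real.pi_pos])
  have hc0 : 0 ≤ c := Real.cos_nonneg_of_mem_Icc ⟨by linarith [Real.pi_pos], by linarith⟩
  have hpyth : s ^ 2 + c ^ 2 = 1 := by
    rw [hsdef, hcdef]; exact Real.sin_sq_add_cos_sq _
  have h2 : 4 * s * c ≤ s + 2 * c := aux18 s c hs0 hc0 hpyth
  have h3 : c ≤ π / 2 - α / 2 := by
    have : sin (π / 2 - α / 2) = c := by rw [Real.sin_pi_div_two_sub, hcdef]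
    calc c = sin (π / 2 - α / 2) := this.symm
      _ ≤ π / 2 - α / 2 := Real.sin_le (by linarith)
  rw [hsα]
  linarith
end
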